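/- Continuity of cluster membership in the merging process: let O_1, O_2, ..., O_r be a sequence of finite antichains of clusters where each O_{j+1} is obtained from O_j by choosing two distinct clusters C_1, C_2 ∈ O_j, setting C_new = LCA(C_1,C_2), and letting O_{j+1} = (O_j \ {C ∈ O_j : C ≤ C_new}) ∪ {C_new}, where C_new ∉ O_j. Then for any cluster c, the set of indices j with c ∈ O_j is an interval: if c ∈ O_a and c ∉ O_i for some a < i, then c ∉ O_j for all j ≥ i. -/

import Mathlib

variable {m : ℕ} {A : Fin m → Type*} [∀ i, DecidableEq (A i)]

/-- Hamming distance between tuples. -/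
def tdist (t t' : ∀ i, A i) : ℕ :=
  (Finset.univ.filter fun i => t i ≠ t' i).card

/-- Distance between clusters (with `none` as the don't-care `*` value). -/
def cdist (C C' : ∀ i, Option (A i)) : ℕ :=
  (Finset.univ.filter fun i => C i = none ∨ C' i = none ∨ C i ≠ C' i).card

/-- `Covers C C'` means cluster `C` covers cluster `C'` (i.e. `C' ≤ C`). -/
def Covers (C C' : ∀ i, Option (A i)) : Prop :=
  ∀ i, C i = none ∨ C i = C' i

/-- `CoversT C t` means cluster `C` covers tuple `t`. -/
def CoversT (C : ∀ i, Option (A i)) (t : ∀ i, A i) : Prop :=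
  ∀ i, C i = none ∨ C i = some (t i)

/-- Level of a cluster: number of `*` entries. -/
def clevel (C : ∀ i, Option (A i)) : ℕ :=
  (Finset.univ.filter fun i => C i = none).card

/-- Least common ancestor (join) of two clusters. -/
def lca (C₁ C₂ : ∀ i, Option (A i)) : ∀ i, Option (A i) :=
  fun i => if C₁ i = C₂ i then C₁ i else none

instance (C C' : ∀ i, Option (A i)) : Decidable (Covers C C') := by
  unfold Covers; infer_instance

instance (C : ∀ i, Option (A i)) (t : ∀ i, A i) : Decidable (CoversT C t) := by
  unfold CoversT; infer_instance

/-! Once a cluster `c` is removed, it lies strictly below the newly inserted join; every later step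
either keeps that ancestor or absorbs it into a larger one, so a strict ancestor of `c` survives
forever, and the antichain condition then keeps `c` out. -/

omit [∀ i, DecidableEq (A i)] in
theorem Covers.trans {X Y Z : ∀ i, Option (A i)} (hXY : Covers X Y) (hYZ : Covers Y Z) :
    Covers X Z := fun i =>
  (hXY i).elim Or.inl fun h => (hYZ i).elim (fun h' => .inl (h ▸ h')) fun h' => .inr (h ▸ h')

omit [∀ i, DecidableEq (A i)] in
theorem Covers.antisymm {X Y : ∀ i, Option (A i)} (hXY : Covers X Y) (hYX : Covers Y X) :
    X = Y := by
  funext i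
  rcases hXY i with h | h
  · rcases hYX i with h' | h'
    · rw [h, h']
    · exact h'.symm
  · exact h

def insertAbsorbing (Z : ∀ i, Option (A i)) (O : Finset (∀ i, Option (A i))) :
    Finset (∀ i, Option (A i)) :=
  insert Z (O.filter fun C => ¬ Covers Z C)

def StrictlyCoveredIn (O : Finset (∀ i, Option (A i))) (c : ∀ i, Option (A i)) : Prop :=
  ∃ X ∈ O, X ≠ c ∧ Covers X c

section insertAbsorbing

variable {Z c : ∀ i, Option (A i)} {O : Finset (∀ i, Option (A i))}

theorem StrictlyCoveredIn.insertAbsorbing (hc : StrictlyCoveredIn O c) :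
    StrictlyCoveredIn (insertAbsorbing Z O) c := by
  obtain ⟨X, hXO, hXc, hcov⟩ := hc
  by_cases hZX : Covers Z X
  · refine ⟨Z, Finset.mem_insert_self _ _, ?_, hZX.trans hcov⟩
    rintro rfl
    exact hXc (hcov.antisymm hZX)
  · exact ⟨X, Finset.mem_insert_of_mem (Finset.mem_filter.mpr ⟨hXO, hZX⟩), hXc, hcov⟩

theorem mem_or_strictlyCoveredIn_insertAbsorbing (hc : c ∈ O) :
    c ∈ insertAbsorbing Z O ∨ StrictlyCoveredIn (insertAbsorbing Z O) c := by
  by_cases hZc : Covers Z c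
  · by_cases hZ : Z = c
    · exact .inl (hZ ▸ Finset.mem_insert_self _ _)
    · exact .inr ⟨Z, Finset.mem_insert_self _ _, hZ, hZc⟩
  · exact .inl (Finset.mem_insert_of_mem (Finset.mem_filter.mpr ⟨hc, hZc⟩))

omit [∀ i, DecidableEq (A i)] in
theorem StrictlyCoveredIn.notMem (hO : IsAntichain Covers (O : Set (∀ i, Option (A i))))
    (hc : StrictlyCoveredIn O c) : c ∉ O := fun hcO =>
  let ⟨_, hXO, hXc, hcov⟩ := hc
  hO hXO hcO hXc hcov

end insertAbsorbing

theorem Nat.imp_of_imp_succ_of_le {P : ℕ → Prop} {r : ℕ} (h : ∀ n < r, P n → P (n + 1))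
    {a b : ℕ} (hab : a ≤ b) (hbr : b ≤ r) (ha : P a) : P b := by
  induction b, hab using Nat.le_induction with
  | base => exact ha
  | succ n _ ih => exact h n hbr (ih (Nat.le_of_succ_le hbr))

/-- continuity of cluster membership in the merging process:
once a cluster leaves the antichain it never comes back. -/
theorem merging_membership_interval (r : ℕ)
    (O : ℕ → Finset (∀ i, Option (A i)))
    (hanti : ∀ j ≤ r, ∀ X ∈ O j, ∀ Y ∈ O j, X ≠ Y → ¬ Covers X Y)
    (hstep : ∀ j < r, ∃ C₁ ∈ O j, ∃ C₂ ∈ O j, C₁ ≠ C₂ ∧ lca C₁ C₂ ∉ O j ∧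
      O (j + 1) = insert (lca C₁ C₂)
        ((O j).filter fun C => ¬ Covers (lca C₁ C₂) C)) :
    ∀ c : ∀ i, Option (A i), ∀ a i j, a < i → i ≤ j → j ≤ r →
      c ∈ O a → c ∉ O i → c ∉ O j := by
  intro c a i j hai hij hjr hca hci
  have hinsert : ∀ n < r, ∃ Z, O (n + 1) = insertAbsorbing Z (O n) := fun n hn =>
    let ⟨C₁, _, C₂, _, _, _, h⟩ := hstep n hn
    ⟨lca C₁ C₂, h⟩
  have hcovered : ∀ n < r, StrictlyCoveredIn (O n) c → StrictlyCoveredIn (O (n + 1)) c :=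
    fun n hn hc => by
      obtain ⟨Z, hZ⟩ := hinsert n hn
      exact hZ ▸ hc.insertAbsorbing
  have hmem_or_covered : ∀ n < r, c ∈ O n ∨ StrictlyCoveredIn (O n) c →
      c ∈ O (n + 1) ∨ StrictlyCoveredIn (O (n + 1)) c := by
    rintro n hn (hc | hc)
    · obtain ⟨Z, hZ⟩ := hinsert n hn
      exact hZ ▸ mem_or_strictlyCoveredIn_insertAbsorbing hc
    · exact .inr (hcovered n hn hc)
  have hcovered_i : StrictlyCoveredIn (O i) c :=
    (Nat.imp_of_imp_succ_of_le hmem_or_covered hai.le (hij.trans hjr) (.inl hca)).resolve_left hci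
  exact (Nat.imp_of_imp_succ_of_le hcovered hij hjr hcovered_i).notMem (hanti j hjr)
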